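/- For fixed N ≥ 1 and β ∈ (0,1), the solutions t*(k,β) of (1-β)/N = ∑_{i=0}^{k} C(N,i)(1-t)^i t^{N-i} (for 1 ≤ k ≤ N-1), extended by t*(N,β) = 0, are strictly decreasing in k: if 1 ≤ k < k' ≤ N then t*(k',β) < t*(k,β). -/

import Mathlib

open Finset Set

/-- The cumulative distribution function of a Binomial(N, 1-t) random variable at k. -/
noncomputable def binCDF (N k : ℕ) (t : ℝ) : ℝ :=
  ∑ i ∈ Finset.range (k + 1), (N.choose i : ℝ) * (1 - t) ^ i * t ^ (N - i)

/-! The derivative of `binCDF N k` telescopes to its single positive term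
`(k + 1) C(N, k+1) (1 - t)^k t^(N-k-1)`, so the CDF is strictly increasing in `t` on `[0, 1]`.
For `k < k'` the sum defining `binCDF N k'` has the extra positive term
`C(N, k+1) (1 - t)^(k+1) t^(N-k-1)`, so
`binCDF N k (t k') < binCDF N k' (t k') = binCDF N k (t k)`, whence `t k' < t k`. -/

-- For `i = 0` the truncated exponent `i - 1 = 0` is harmless because of the factor `i`.
lemma hasDerivAt_binomial_term (N i : ℕ) (t : ℝ) :
    HasDerivAt (fun x : ℝ => (N.choose i : ℝ) * (1 - x) ^ i * x ^ (N - i))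
      ((i + 1 : ℝ) * (N.choose (i + 1) : ℝ) * (1 - t) ^ i * t ^ (N - (i + 1))
        - (i : ℝ) * (N.choose i : ℝ) * (1 - t) ^ (i - 1) * t ^ (N - i)) t := by
  have h_one_sub :
      HasDerivAt (fun x : ℝ => (1 - x) ^ i) ((i : ℝ) * (1 - t) ^ (i - 1) * (-1)) t :=
    (hasDerivAt_pow i (1 - t)).comp t ((hasDerivAt_id t).const_sub 1)
  refine ((h_one_sub.const_mul (N.choose i : ℝ)).mul (hasDerivAt_pow (N - i) t)).congr_deriv ?_
  have h_choose :
      ((i : ℝ) + 1) * (N.choose (i + 1) : ℝ) = ((N - i : ℕ) : ℝ) * (N.choose i : ℝ) := by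
    exact_mod_cast (mul_comm _ _).trans ((Nat.choose_succ_right_eq N i).trans (mul_comm _ _))
  rw [show N - (i + 1) = N - i - 1 by omega, h_choose]
  ring

lemma binCDF_hasDerivAt (N k : ℕ) (t : ℝ) :
    HasDerivAt (binCDF N k)
      ((k + 1 : ℝ) * (N.choose (k + 1) : ℝ) * (1 - t) ^ k * t ^ (N - (k + 1))) t := by
  have h_telescope := Finset.sum_range_sub
    (fun i : ℕ => (i : ℝ) * (N.choose i : ℝ) * (1 - t) ^ (i - 1) * t ^ (N - i)) (k + 1)
  simp only [Nat.cast_add, Nat.cast_one, Nat.add_sub_cancel, Nat.cast_zero, zero_mul,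
    sub_zero] at h_telescope
  rw [← h_telescope]
  exact HasDerivAt.fun_sum fun i _ => hasDerivAt_binomial_term N i t

lemma binCDF_strictMonoOn {N k : ℕ} (hk : k < N) :
    StrictMonoOn (binCDF N k) (Set.Icc (0 : ℝ) 1) := by
  refine strictMonoOn_of_deriv_pos (convex_Icc 0 1)
    (fun x _ => (binCDF_hasDerivAt N k x).continuousAt.continuousWithinAt) fun x hx => ?_
  rw [interior_Icc] at hx
  rw [(binCDF_hasDerivAt N k x).deriv]
  have h_choose : (0 : ℝ) < N.choose (k + 1) := by exact_mod_cast Nat.choose_pos hk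
  have h_one_sub : (0 : ℝ) < 1 - x := by linarith [hx.2]
  have h_pos : (0 : ℝ) < x := hx.1
  positivity

lemma binCDF_lt_binCDF {N k k' : ℕ} (hkk' : k < k') (hk : k < N) {x : ℝ}
    (hx : x ∈ Set.Ioo (0 : ℝ) 1) : binCDF N k x < binCDF N k' x := by
  have h_one_sub : (0 : ℝ) < 1 - x := by linarith [hx.2]
  have h_pos : (0 : ℝ) < x := hx.1
  have h_choose : (0 : ℝ) < N.choose (k + 1) := by exact_mod_cast Nat.choose_pos hk
  refine Finset.sum_lt_sum_of_subset (i := k + 1) (range_subset_range.mpr (by omega))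
    (by simp only [Finset.mem_range]; omega) (by simp) (by positivity) fun j _ _ => ?_
  positivity

theorem stmt_1_general (N : ℕ) (β : ℝ)
    (t : ℕ → ℝ)
    (ht : ∀ k, 1 ≤ k → k ≤ N - 1 →
      t k ∈ Set.Ioo (0 : ℝ) 1 ∧ (1 - β) / N = binCDF N k (t k))
    (htN : t N = 0) :
    ∀ k k', 1 ≤ k → k < k' → k' ≤ N → t k' < t k := by
  intro k k' hk hkk' hk'N
  obtain ⟨hk_mem, hk_eq⟩ := ht k hk (by omega)
  rcases hk'N.eq_or_lt with rfl | hk'N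
  · rw [htN]
    exact hk_mem.1
  obtain ⟨hk'_mem, hk'_eq⟩ := ht k' (by omega) (by omega)
  refine ((binCDF_strictMonoOn (show k < N by omega)).lt_iff_lt (Ioo_subset_Icc_self hk'_mem)
    (Ioo_subset_Icc_self hk_mem)).mp ?_
  calc binCDF N k (t k') < binCDF N k' (t k') := binCDF_lt_binCDF hkk' (by omega) hk'_mem
    _ = binCDF N k (t k) := by rw [← hk'_eq, hk_eq]

theorem stmt_1 (N : ℕ) (β : ℝ) (hN : 1 ≤ N) (hβ : β ∈ Set.Ioo (0 : ℝ) 1)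
    (t : ℕ → ℝ)
    (ht : ∀ k, 1 ≤ k → k ≤ N - 1 →
      t k ∈ Set.Ioo (0 : ℝ) 1 ∧ (1 - β) / N = binCDF N k (t k))
    (htN : t N = 0) :
    ∀ k k', 1 ≤ k → k < k' → k' ≤ N → t k' < t k :=
  stmt_1_general N β t ht htN
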